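/- Let X be a compact metric space with generalised dyadic cubes Q and net content N^f, A ⊆ X Borel, f a dimension function. If there is c > 0 with N^f(A ∩ Q) > c·N^f(Q) for every generalised cube Q, then N^f(A ∩ U) = N^f(U) for every non-empty open set U ⊆ X. -/

import Mathlib

open Metric Set ENNReal Filter MeasureTheory

/-- A dimension function: continuous, nondecreasing, vanishing at 0, positive on positives. -/
structure DimFunc (f : ℝ → ℝ) : Prop where
  continuous : Continuous f
  mono : Monotone f
  map_zero : f 0 = 0
  pos : ∀ r : ℝ, 0 < r → 0 < f r

/-- `f` is doubling with constant `D`. -/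
def DoublingWith (f : ℝ → ℝ) (D : ℝ) : Prop :=
  ∀ r : ℝ, 0 < r → f (2 * r) < D * f r

/-- `f ⪯ g`: the ratio `f/g` is monotonic on `(0,∞)` and has a positive
(possibly infinite) limit as `r → 0⁺`. -/
def DimLE (f g : ℝ → ℝ) : Prop :=
  (MonotoneOn (fun r => f r / g r) (Ioi (0:ℝ)) ∨
    AntitoneOn (fun r => f r / g r) (Ioi (0:ℝ))) ∧
  ∃ L : ℝ≥0∞, 0 < L ∧
    Tendsto (fun r => ENNReal.ofReal (f r / g r)) (nhdsWithin 0 (Ioi (0:ℝ))) (nhds L)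

/-- A countable family consisting of (open) balls. -/
def IsBallFamily {X : Type*} [MetricSpace X] (U : ℕ → Set X) : Prop :=
  ∀ i, ∃ x : X, ∃ r : ℝ, U i = ball x r

/-- Hausdorff `f`-content: infimum of `∑ f(diam Bᵢ)` over countable covers by balls. -/
noncomputable def hCont {X : Type*} [MetricSpace X] (f : ℝ → ℝ) (A : Set X) : ℝ≥0∞ :=
  ⨅ (U : ℕ → Set X) (_ : IsBallFamily U) (_ : A ⊆ ⋃ i, U i),
    ∑' i, ENNReal.ofReal (f (diam (U i)))

/-- Hausdorff `f`-premeasure at mesh `η`. -/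
noncomputable def hMeasAux {X : Type*} [MetricSpace X] (f : ℝ → ℝ) (η : ℝ) (A : Set X) : ℝ≥0∞ :=
  ⨅ (U : ℕ → Set X) (_ : IsBallFamily U) (_ : A ⊆ ⋃ i, U i)
    (_ : ∀ i, diam (U i) ≤ η),
    ∑' i, ENNReal.ofReal (f (diam (U i)))

/-- Hausdorff `f`-measure: limit of the premeasures as the mesh tends to `0`. -/
noncomputable def hMeas {X : Type*} [MetricSpace X] (f : ℝ → ℝ) (A : Set X) : ℝ≥0∞ :=
  ⨆ (η : ℝ) (_ : 0 < η), hMeasAux f η A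

/-- The Hausdorff `g`-measure is `g`-Ahlfors regular with explicit constants `c₁, c₂`. -/
def AhlforsWith (g : ℝ → ℝ) (c₁ c₂ : ℝ) (Y : Type*) [MetricSpace Y] : Prop :=
  ∀ x : Y, ∀ r : ℝ, 0 < r →
    ENNReal.ofReal (c₁ * g r) ≤ hMeas g (ball x r) ∧
    hMeas g (ball x r) ≤ ENNReal.ofReal (c₂ * g r)

/-- The space `Y` supports a `g`-Ahlfors regular Hausdorff measure `H^g`. -/
def Ahlfors (g : ℝ → ℝ) (Y : Type*) [MetricSpace Y] : Prop :=
  ∃ c₁ c₂ : ℝ, 0 < c₁ ∧ 0 < c₂ ∧ AhlforsWith g c₁ c₂ Y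

/-- The class `G^f(X)`: `G_δ` sets whose intersection with every ball has
Hausdorff `f`-content uniformly comparable to that of the ball. -/
def MemG {X : Type*} [MetricSpace X] (f : ℝ → ℝ) (A : Set X) : Prop :=
  IsGδ A ∧ ∃ c : ℝ, 0 < c ∧ ∀ (x : X) (r : ℝ), 0 < r →
    ENNReal.ofReal c * hCont f (ball x r) < hCont f (A ∩ ball x r)

/-- The limsup set of a sequence of sets. -/
def limsupSet {X : Type*} (E : ℕ → Set X) : Set X := ⋂ N, ⋃ n, ⋃ (_ : N ≤ n), E n

/-- A system of generalised dyadic cubes (Käenmäki–Rajala–Suomala with `r = 1/4`). -/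
structure CubeSystem (Y : Type*) [MetricSpace Y] where
  cubes : ℤ → Set (Set Y)
  cover : ∀ n : ℤ, ⋃₀ cubes n = univ
  pdisj : ∀ n : ℤ, (cubes n).PairwiseDisjoint id
  nested : ∀ ⦃n k : ℤ⦄, k ≤ n → ∀ q ∈ cubes n, ∀ p ∈ cubes k, q ⊆ p ∨ Disjoint q p
  comparable : ∀ n : ℤ, ∀ q ∈ cubes n, ∃ x : Y,
    ball x ((4:ℝ) ^ (-n - 2)) ⊆ q ∧ q ⊆ ball x ((4:ℝ) ^ (-n + 1))

/-- `q` is a generalised cube of the system `C`. -/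
def CubeSystem.IsCube {Y : Type*} [MetricSpace Y] (C : CubeSystem Y) (q : Set Y) : Prop :=
  ∃ n : ℤ, q ∈ C.cubes n

/-- Net `f`-content: infimum of `∑ f(diam Qᵢ)` over countable covers by generalised cubes. -/
noncomputable def netCont {Y : Type*} [MetricSpace Y] (C : CubeSystem Y)
    (f : ℝ → ℝ) (A : Set Y) : ℝ≥0∞ :=
  ⨅ (U : ℕ → Set Y) (_ : ∀ i, C.IsCube (U i)) (_ : A ⊆ ⋃ i, U i),
    ∑' i, ENNReal.ofReal (f (diam (U i)))

/-- Weighted Hausdorff `f`-premeasure at mesh `η`: infimum of `∑ cᵢ f(|Aᵢ|)` over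
weighted covers `χ_A ≤ ∑ cᵢ χ_{Aᵢ}` with `|Aᵢ| ≤ η`. -/
noncomputable def wCont {X : Type*} [MetricSpace X] (f : ℝ → ℝ) (η : ℝ≥0∞) (A : Set X) : ℝ≥0∞ :=
  ⨅ (S : ℕ → Set X) (c : ℕ → ℝ≥0∞)
    (_ : ∀ i, 0 < c i ∧ c i < ⊤)
    (_ : ∀ i, EMetric.diam (S i) ≤ η)
    (_ : ∀ x ∈ A, 1 ≤ ∑' i, (S i).indicator (fun _ => c i) x),
    ∑' i, c i * ENNReal.ofReal (f (diam (S i)))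

/-- Weighted Hausdorff `f`-measure: limit of the weighted premeasures as mesh `→ 0`. -/
noncomputable def wMeas {X : Type*} [MetricSpace X] (f : ℝ → ℝ) (A : Set X) : ℝ≥0∞ :=
  ⨆ (η : ℝ≥0∞) (_ : 0 < η), wCont f η A

/-- The singular value function `φ^f(A)`. -/
noncomputable def svf {X : Type*} [MetricSpace X] [MeasurableSpace X]
    (f : ℝ → ℝ) (A : Set X) : ℝ≥0∞ :=
  ⨆ (μ : Measure X) (_ : IsProbabilityMeasure μ) (_ : μ Aᶜ = 0),
    ⨅ (x ∈ A) (r : ℝ) (_ : 0 < r), ENNReal.ofReal (f r) / μ (ball x r)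

/-!
Net content agrees with the outer measure generated by the costs `f (diam Q)` of cubes, because
empty sets in a cover can be traded for arbitrarily cheap cubes; in particular it is countably
subadditive.

Let `P` be a cube and `(Qᵢ)` a cube cover of `A ∩ P`. Choose a level `n` so deep that the `Qᵢ`
of level beyond `n` carry total cost at most `c ε`. Then `P` is covered by the `Qᵢ` together with
the level-`n` subcubes `p ⊆ P` lying in no single `Qᵢ`. Only deeper `Qᵢ` meet such a `p`, so the
hypothesis gives `c N(p) ≤ ∑_{Qᵢ ⊆ p} f (diam Qᵢ)`, and summing over the disjoint `p` bounds their
total content by `ε`. Hence `N(P) ≤ ∑ᵢ f (diam Qᵢ)`.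

An open set `U` is a countable disjoint union of maximal cubes. Applying the cube case to those
pieces that lie in no single `Qᵢ` gives `N(U) ≤ N(A ∩ U)`.
-/

open scoped Topology

lemma ENNReal.tsum_tsum_indicator_subset_le {X ι : Type*} {𝒟 : Set (Set X)}
    (h𝒟 : 𝒟.PairwiseDisjoint id) {Q : ι → Set X} (hQ : ∀ i, (Q i).Nonempty) (a : ι → ℝ≥0∞) :
    ∑' P : 𝒟, ∑' i, {i | Q i ⊆ P}.indicator a i ≤ ∑' i, a i := by
  rw [ENNReal.tsum_comm]
  refine ENNReal.tsum_le_tsum fun i => ?_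
  by_cases hi : ∃ P : 𝒟, Q i ⊆ P
  · obtain ⟨P₀, hP₀⟩ := hi
    rw [tsum_eq_single P₀ fun P hP => indicator_of_notMem (fun hsub => hP ?_) _]
    · exact indicator_le_self _ _ _
    obtain ⟨x, hx⟩ := hQ i
    exact Subtype.ext (h𝒟.elim P.2 P₀.2 (not_disjoint_iff.mpr ⟨x, hsub hx, hP₀ hx⟩))
  · simp only [not_exists] at hi
    simp [indicator_of_notMem, hi]

lemma ENNReal.exists_tsum_indicator_lt_le {ι : Type*} {a : ι → ℝ≥0∞} (ha : ∑' i, a i ≠ ⊤)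
    (m : ι → ℤ) {η : ℝ≥0∞} (hη : 0 < η) :
    ∃ n₀ : ℤ, ∀ n ≥ n₀, ∑' i, {i | n < m i}.indicator a i ≤ η := by
  obtain ⟨F, hF⟩ := ((ENNReal.tendsto_tsum_compl_atTop_zero ha).eventually (gt_mem_nhds hη)).exists
  obtain ⟨n₀, hn₀⟩ := (F.image m).bddAbove
  refine ⟨n₀, fun n hn => le_trans ?_ hF.le⟩
  have hsub : {i | n < m i} ⊆ (F : Set ι)ᶜ := fun i hi hiF => by
    have := hn₀ (Finset.mem_coe.mpr (Finset.mem_image_of_mem m hiF))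
    change n < m i at hi
    omega
  calc ∑' i, {i | n < m i}.indicator a i ≤ ∑' i, (F : Set ι)ᶜ.indicator a i :=
        ENNReal.tsum_le_tsum (indicator_le_indicator_of_subset hsub fun _ => zero_le)
    _ = ∑' i : {x // x ∉ F}, a i := (tsum_subtype _ a).symm

namespace CubeSystem

section

variable {X : Type*} [MetricSpace X] (C : CubeSystem X)

lemma nonempty_of_mem_cubes {n : ℤ} {q : Set X} (hq : q ∈ C.cubes n) : q.Nonempty := by
  obtain ⟨x, hx, -⟩ := C.comparable n q hq
  exact ⟨x, hx (mem_ball_self (by positivity))⟩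

lemma IsCube.nonempty {C : CubeSystem X} {q : Set X} (hq : C.IsCube q) : q.Nonempty :=
  C.nonempty_of_mem_cubes hq.choose_spec

lemma exists_mem_cubes (n : ℤ) (x : X) : ∃ q ∈ C.cubes n, x ∈ q :=
  mem_sUnion.mp (by rw [C.cover n]; trivial)

lemma subset_of_mem_cubes_of_le {n k : ℤ} (hkn : k ≤ n) {q p : Set X} (hq : q ∈ C.cubes n)
    (hp : p ∈ C.cubes k) (hqp : (q ∩ p).Nonempty) : q ⊆ p :=
  (C.nested hkn q hq p hp).resolve_right (not_disjoint_iff_nonempty_inter.mpr hqp)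

lemma IsCube.subset_or_subset {C : CubeSystem X} {p q : Set X} (hp : C.IsCube p)
    (hq : C.IsCube q) (hpq : (p ∩ q).Nonempty) : p ⊆ q ∨ q ⊆ p := by
  obtain ⟨n, hn⟩ := hp
  obtain ⟨k, hk⟩ := hq
  rcases le_total k n with hkn | hnk
  · exact .inl (C.subset_of_mem_cubes_of_le hkn hn hk hpq)
  · exact .inr (C.subset_of_mem_cubes_of_le hnk hk hn (inter_comm p q ▸ hpq))

lemma exists_subset_ball_of_mem_cubes (x : X) {ρ : ℝ} (hρ : 0 < ρ) :
    ∃ n : ℕ, ∀ q ∈ C.cubes n, x ∈ q → q ⊆ ball x ρ := by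
  obtain ⟨n, hn⟩ := pow_unbounded_of_one_lt (8 / ρ) (by norm_num : (1:ℝ) < 4)
  have hr : 2 * (4:ℝ) ^ (-(n:ℤ) + 1) < ρ := by
    rw [zpow_add₀ (by norm_num), zpow_neg, zpow_natCast, zpow_one]
    rw [div_lt_iff₀ hρ] at hn
    have : (0:ℝ) < 4 ^ n := by positivity
    calc 2 * (((4:ℝ) ^ n)⁻¹ * 4) = 8 / 4 ^ n := by ring
      _ < ρ := by rw [div_lt_iff₀ this]; linarith
  refine ⟨n, fun q hq hxq z hzq => ?_⟩
  obtain ⟨y, -, hqy⟩ := C.comparable n q hq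
  calc dist z x ≤ dist z y + dist x y := dist_triangle_right z x y
    _ < (4:ℝ) ^ (-(n:ℤ) + 1) + (4:ℝ) ^ (-(n:ℤ) + 1) := add_lt_add (hqy hzq) (hqy hxq)
    _ < ρ := by linarith

lemma countable_cubes [TopologicalSpace.SeparableSpace X] (n : ℤ) : (C.cubes n).Countable := by
  refine (C.pdisj n).countable_of_nonempty_interior fun q hq => ?_
  obtain ⟨x, hx, -⟩ := C.comparable n q hq
  exact ⟨x, interior_maximal hx isOpen_ball (mem_ball_self (by positivity))⟩

-- Levels are cut off at `0`: otherwise no cube would be maximal in `U = univ`.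
def maximalCubes (U : Set X) : Set (Set X) :=
  {P | ∃ n : ℕ, P ∈ C.cubes n ∧ P ⊆ U ∧ ∀ m < n, ∀ q ∈ C.cubes m, P ⊆ q → ¬ q ⊆ U}

variable {C}

lemma isCube_of_mem_maximalCubes {U P : Set X} (hP : P ∈ C.maximalCubes U) : C.IsCube P :=
  ⟨_, hP.choose_spec.1⟩

lemma countable_maximalCubes [TopologicalSpace.SeparableSpace X] (U : Set X) :
    (C.maximalCubes U).Countable :=
  (countable_iUnion fun n : ℕ => C.countable_cubes n).mono
    fun _ ⟨n, hP, _⟩ => mem_iUnion.mpr ⟨n, hP⟩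

lemma pairwiseDisjoint_maximalCubes (U : Set X) : (C.maximalCubes U).PairwiseDisjoint id := by
  rintro P₁ ⟨n₁, hP₁, hP₁U, hmax₁⟩ P₂ ⟨n₂, hP₂, hP₂U, hmax₂⟩ hne
  wlog hle : n₁ ≤ n₂ generalizing P₁ P₂ n₁ n₂
  · exact (this n₂ hP₂ hP₂U hmax₂ n₁ hP₁ hP₁U hmax₁ hne.symm (le_of_not_ge hle)).symm
  rcases hle.lt_or_eq with hlt | rfl
  · refine (C.nested (Int.ofNat_le.mpr hle) P₂ hP₂ P₁ hP₁).elim (fun hsub => ?_) fun h => h.symm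
    exact absurd hP₁U (hmax₂ n₁ hlt P₁ hP₁ hsub)
  · exact C.pdisj n₁ hP₁ hP₂ hne

lemma sUnion_maximalCubes {U : Set X} (hU : IsOpen U) : ⋃₀ C.maximalCubes U = U := by
  classical
  refine (sUnion_subset fun P hP => hP.choose_spec.2.1).antisymm fun x hx => ?_
  obtain ⟨ρ, hρ, hball⟩ := Metric.isOpen_iff.mp hU x hx
  have hex : ∃ n : ℕ, ∃ q ∈ C.cubes n, x ∈ q ∧ q ⊆ U := by
    obtain ⟨n, hn⟩ := C.exists_subset_ball_of_mem_cubes x hρ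
    obtain ⟨q, hq, hxq⟩ := C.exists_mem_cubes n x
    exact ⟨n, q, hq, hxq, (hn q hq hxq).trans hball⟩
  obtain ⟨q, hq, hxq, hqU⟩ := Nat.find_spec hex
  refine ⟨q, ⟨Nat.find hex, hq, hqU, fun m hm q' hq' hqq' hq'U => ?_⟩, hxq⟩
  exact Nat.find_min hex hm ⟨q', hq', hqq' hxq, hq'U⟩

end

section

variable {X : Type*} [MetricSpace X] (C : CubeSystem X) (f : ℝ → ℝ)

open Classical in
noncomputable def netCost (s : Set X) : ℝ≥0∞ :=
  if s = ∅ then 0 else if C.IsCube s then ENNReal.ofReal (f (diam s)) else ⊤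

noncomputable def netOuterMeasure : OuterMeasure X :=
  OuterMeasure.ofFunction (C.netCost f) (by simp [netCost])

variable {C f}

lemma netCost_of_isCube {q : Set X} (hq : C.IsCube q) :
    C.netCost f q = ENNReal.ofReal (f (diam q)) := by
  simp [netCost, hq.nonempty.ne_empty, hq]

lemma netOuterMeasure_le_of_isCube {q : Set X} (hq : C.IsCube q) :
    C.netOuterMeasure f q ≤ ENNReal.ofReal (f (diam q)) :=
  (OuterMeasure.ofFunction_le q).trans_eq (netCost_of_isCube hq)

lemma netOuterMeasure_le_tsum {ι : Type*} [Countable ι] {S : Set X} {Q : ι → Set X}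
    (hQ : ∀ i, C.IsCube (Q i)) (hS : S ⊆ ⋃ i, Q i) :
    C.netOuterMeasure f S ≤ ∑' i, ENNReal.ofReal (f (diam (Q i))) :=
  (measure_mono hS).trans <| (measure_iUnion_le Q).trans <|
    ENNReal.tsum_le_tsum fun i => netOuterMeasure_le_of_isCube (hQ i)

lemma exists_isCube_ofReal_lt [Nonempty X] (hf : DimFunc f) {ε : ℝ≥0∞} (hε : 0 < ε) :
    ∃ q, C.IsCube q ∧ ENNReal.ofReal (f (diam q)) < ε := by
  have hf0 : Tendsto (fun r => ENNReal.ofReal (f (2 * r))) (𝓝[>] 0) (𝓝 0) := by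
    have := (ENNReal.continuous_ofReal.comp (hf.continuous.comp (continuous_const_mul 2))).tendsto 0
    simpa [Function.comp_def, hf.map_zero] using this.mono_left nhdsWithin_le_nhds
  obtain ⟨ρ, hfρ, hρ⟩ := ((hf0.eventually (gt_mem_nhds hε)).and self_mem_nhdsWithin).exists
  obtain ⟨x⟩ := ‹Nonempty X›
  obtain ⟨n, hn⟩ := C.exists_subset_ball_of_mem_cubes x hρ
  obtain ⟨q, hq, hxq⟩ := C.exists_mem_cubes n x
  refine ⟨q, ⟨n, hq⟩, lt_of_le_of_lt (ENNReal.ofReal_le_ofReal (hf.mono ?_)) hfρ⟩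
  exact (diam_mono (hn q hq hxq) isBounded_ball).trans (diam_ball hρ.le)

lemma netCont_eq_netOuterMeasure [Nonempty X] (hf : DimFunc f) :
    netCont C f = C.netOuterMeasure f := by
  funext S
  refine le_antisymm ?_ (le_iInf₂ fun V hV => le_iInf (netOuterMeasure_le_tsum hV))
  rw [netOuterMeasure, OuterMeasure.ofFunction_apply]
  refine le_iInf₂ fun t ht => ENNReal.le_of_forall_pos_le_add fun ε hε hfin => ?_
  obtain ⟨δ, hδ, hδε⟩ := ENNReal.exists_pos_sum_of_countable' (ENNReal.coe_pos.2 hε).ne' ℕ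
  choose p hp hpδ using fun n => C.exists_isCube_ofReal_lt hf (hδ n)
  classical
  -- the empty sets of `t` are replaced by cheap cubes
  let V n := if C.IsCube (t n) then t n else p n
  have hV : ∀ n, C.IsCube (V n) := fun n => by
    by_cases h : C.IsCube (t n) <;> simp [V, h, hp]
  have htV : ∀ n, t n ⊆ V n := fun n => by
    by_cases h : C.IsCube (t n)
    · simp [V, h]
    · have htn : C.netCost f (t n) ≠ ⊤ := ENNReal.ne_top_of_tsum_ne_top hfin.ne n
      have : t n = ∅ := by
        by_contra hne
        simp [netCost, hne, h] at htn
      simp [this]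
  have hcost : ∀ n, ENNReal.ofReal (f (diam (V n))) ≤ C.netCost f (t n) + δ n := fun n => by
    by_cases h : C.IsCube (t n)
    · simp only [V, h, if_true, netCost_of_isCube h]
      exact le_self_add
    · simp only [V, h, if_false]
      exact (hpδ n).le.trans le_add_self
  calc netCont C f S ≤ ∑' n, ENNReal.ofReal (f (diam (V n))) :=
        iInf₂_le_of_le V hV (iInf_le _ (ht.trans (iUnion_mono htV)))
    _ ≤ ∑' n, (C.netCost f (t n) + δ n) := ENNReal.tsum_le_tsum hcost
    _ ≤ ∑' n, C.netCost f (t n) + ε := by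
        rw [ENNReal.tsum_add]; exact add_le_add_right hδε.le _

end

section

variable {X : Type*} [MetricSpace X] [TopologicalSpace.SeparableSpace X] {C : CubeSystem X}
  {f : ℝ → ℝ} {A : Set X} {c : ℝ≥0∞}

lemma netOuterMeasure_le_tsum_of_isCube_of_inter_subset (hc₀ : c ≠ 0) (hc : c ≠ ⊤)
    (h : ∀ q, C.IsCube q → c * C.netOuterMeasure f q ≤ C.netOuterMeasure f (A ∩ q))
    {P : Set X} (hP : C.IsCube P) {ι : Type*} [Countable ι] {Q : ι → Set X}
    (hQ : ∀ i, C.IsCube (Q i)) (hcov : A ∩ P ⊆ ⋃ i, Q i) :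
    C.netOuterMeasure f P ≤ ∑' i, ENNReal.ofReal (f (diam (Q i))) := by
  classical
  set a := fun i => ENNReal.ofReal (f (diam (Q i)))
  obtain ⟨nP, hP⟩ := hP
  choose m hm using hQ
  refine ENNReal.le_of_forall_pos_le_add fun ε hε ha => ?_
  obtain ⟨n₀, hn₀⟩ := ENNReal.exists_tsum_indicator_lt_le ha.ne m
    (ENNReal.mul_pos hc₀ (ENNReal.coe_pos.2 hε).ne')
  set n := max nP n₀
  let T : Set (Set X) := {p | p ∈ C.cubes n ∧ p ⊆ P ∧ ∀ i, ¬ p ⊆ Q i}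
  have : Countable T := ((C.countable_cubes n).mono fun p hp => hp.1).to_subtype
  have hPcov : P ⊆ (⋃ i, Q i) ∪ ⋃ p : T, (p : Set X) := by
    intro x hx
    obtain ⟨p, hp, hxp⟩ := C.exists_mem_cubes n x
    by_cases hpQ : ∃ i, p ⊆ Q i
    · obtain ⟨i, hpi⟩ := hpQ
      exact .inl (mem_iUnion.mpr ⟨i, hpi hxp⟩)
    · refine .inr (mem_iUnion.mpr ⟨⟨p, hp, ?_, not_exists.mp hpQ⟩, hxp⟩)
      exact C.subset_of_mem_cubes_of_le (le_max_left _ _) hp hP ⟨x, hxp, hx⟩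
  -- a cube `Q i` meeting a residual cube `p` is strictly deeper than `p`, hence inside it
  have hresid : ∀ p : T, c * C.netOuterMeasure f p ≤
      ∑' i, {i | Q i ⊆ p}.indicator ({i | n < m i}.indicator a) i := by
    rintro ⟨p, hp, hpP, hpQ⟩
    have hcov' : A ∩ p ⊆ ⋃ i : ↥({i | Q i ⊆ p} ∩ {i | n < m i}), Q i := by
      rintro y ⟨hyA, hyp⟩
      obtain ⟨i, hyi⟩ := mem_iUnion.mp (hcov ⟨hyA, hpP hyp⟩)
      have hni : n < m i := not_le.mp fun hle =>
        hpQ i (C.subset_of_mem_cubes_of_le hle hp (hm i) ⟨y, hyp, hyi⟩)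
      exact mem_iUnion.mpr
        ⟨⟨i, C.subset_of_mem_cubes_of_le hni.le (hm i) hp ⟨y, hyi, hyp⟩, hni⟩, hyi⟩
    calc c * C.netOuterMeasure f p ≤ C.netOuterMeasure f (A ∩ p) := h p ⟨n, hp⟩
      _ ≤ ∑' i : ↥({i | Q i ⊆ p} ∩ {i | n < m i}), a i :=
          netOuterMeasure_le_tsum (fun i => ⟨m i, hm i⟩) hcov'
      _ = _ := by rw [tsum_subtype, indicator_indicator]
  have hT : ∑' p : T, C.netOuterMeasure f p ≤ ε := by
    refine (ENNReal.mul_le_mul_iff_right hc₀ hc).mp ?_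
    calc c * ∑' p : T, C.netOuterMeasure f p = ∑' p : T, c * C.netOuterMeasure f p :=
          ENNReal.tsum_mul_left.symm
      _ ≤ ∑' p : T, ∑' i, {i | Q i ⊆ p}.indicator ({i | n < m i}.indicator a) i :=
          ENNReal.tsum_le_tsum hresid
      _ ≤ ∑' i, {i | n < m i}.indicator a i :=
          ENNReal.tsum_tsum_indicator_subset_le ((C.pdisj n).subset fun p hp => hp.1)
            (fun i => C.nonempty_of_mem_cubes (hm i)) _
      _ ≤ c * ε := hn₀ n (le_max_right _ _)
  calc C.netOuterMeasure f P
      ≤ C.netOuterMeasure f (⋃ i, Q i) + C.netOuterMeasure f (⋃ p : T, (p : Set X)) :=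
        (measure_mono hPcov).trans (measure_union_le _ _)
    _ ≤ ∑' i, a i + ∑' p : T, C.netOuterMeasure f p :=
        add_le_add (netOuterMeasure_le_tsum (fun i => ⟨m i, hm i⟩) subset_rfl)
          (measure_iUnion_le _)
    _ ≤ ∑' i, a i + ε := add_le_add_right hT _

lemma netOuterMeasure_le_tsum_of_isOpen_of_inter_subset (hc₀ : c ≠ 0) (hc : c ≠ ⊤)
    (h : ∀ q, C.IsCube q → c * C.netOuterMeasure f q ≤ C.netOuterMeasure f (A ∩ q))
    {U : Set X} (hU : IsOpen U) {ι : Type*} [Countable ι] {Q : ι → Set X}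
    (hQ : ∀ i, C.IsCube (Q i)) (hcov : A ∩ U ⊆ ⋃ i, Q i) :
    C.netOuterMeasure f U ≤ ∑' i, ENNReal.ofReal (f (diam (Q i))) := by
  classical
  set 𝒟 := C.maximalCubes U
  have h𝒟disj : 𝒟.PairwiseDisjoint id := pairwiseDisjoint_maximalCubes U
  have h𝒟cube : ∀ P ∈ 𝒟, C.IsCube P := fun _ => isCube_of_mem_maximalCubes
  rw [← sUnion_maximalCubes hU] at hcov ⊢
  set a := fun i => ENNReal.ofReal (f (diam (Q i)))
  let J : Set (Set X) := {P ∈ 𝒟 | ∀ i, ¬ P ⊆ Q i}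
  let G : Set ι := {i | ∀ P ∈ J, ¬ Q i ⊆ P}
  have : Countable J := ((countable_maximalCubes U).mono fun P hP => hP.1).to_subtype
  have hcovG : ⋃₀ 𝒟 ⊆ (⋃ i : G, Q i) ∪ ⋃ P : J, (P : Set X) := by
    rintro x ⟨P, hP, hxP⟩
    by_cases hPQ : ∃ i, P ⊆ Q i
    · obtain ⟨i, hPi⟩ := hPQ
      refine .inl (mem_iUnion.mpr ⟨⟨i, fun P' hP' hiP' => ?_⟩, hPi hxP⟩)
      have hPP' : P = P' :=
        h𝒟disj.elim hP hP'.1 (not_disjoint_iff.mpr ⟨x, hxP, hiP' (hPi hxP)⟩)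
      exact hP'.2 i (hPP' ▸ hPi)
    · exact .inr (mem_iUnion.mpr ⟨⟨P, hP, not_exists.mp hPQ⟩, hxP⟩)
  have hJ : ∀ P : J, C.netOuterMeasure f P ≤
      ∑' i, {i | Q i ⊆ P}.indicator (Gᶜ.indicator a) i := by
    rintro ⟨P, hP, hPQ⟩
    have hcov' : A ∩ P ⊆ ⋃ i : ↥({i | Q i ⊆ P} ∩ Gᶜ), Q i := by
      rintro y ⟨hyA, hyP⟩
      obtain ⟨i, hyi⟩ := mem_iUnion.mp (hcov ⟨hyA, P, hP, hyP⟩)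
      have hiP : Q i ⊆ P :=
        ((hQ i).subset_or_subset (h𝒟cube P hP) ⟨y, hyi, hyP⟩).resolve_right (hPQ i)
      exact mem_iUnion.mpr ⟨⟨i, hiP, fun hG => hG P ⟨hP, hPQ⟩ hiP⟩, hyi⟩
    calc C.netOuterMeasure f P ≤ ∑' i : ↥({i | Q i ⊆ P} ∩ Gᶜ), a i :=
          netOuterMeasure_le_tsum_of_isCube_of_inter_subset hc₀ hc h (h𝒟cube P hP)
            (fun i => hQ i) hcov'
      _ = _ := by rw [tsum_subtype, indicator_indicator]
  calc C.netOuterMeasure f (⋃₀ 𝒟)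
      ≤ C.netOuterMeasure f (⋃ i : G, Q i) + C.netOuterMeasure f (⋃ P : J, (P : Set X)) :=
        (measure_mono hcovG).trans (measure_union_le _ _)
    _ ≤ ∑' i : G, a i + ∑' P : J, ∑' i, {i | Q i ⊆ P}.indicator (Gᶜ.indicator a) i :=
        add_le_add (netOuterMeasure_le_tsum (fun i => hQ i) subset_rfl)
          ((measure_iUnion_le _).trans (ENNReal.tsum_le_tsum hJ))
    _ ≤ ∑' i, G.indicator a i + ∑' i, Gᶜ.indicator a i := by
        rw [tsum_subtype]
        exact add_le_add_right (ENNReal.tsum_tsum_indicator_subset_le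
          (h𝒟disj.subset fun P hP => hP.1) (fun i => (hQ i).nonempty) _) _
    _ = ∑' i, a i := by simp only [← ENNReal.tsum_add, indicator_self_add_compl_apply]

end

end CubeSystem

theorem stmt7_general {X : Type*} [MetricSpace X] [CompactSpace X]
    (C : CubeSystem X) (f : ℝ → ℝ) (hf : DimFunc f)
    (A : Set X) (c : ℝ) (hc : 0 < c)
    (h : ∀ q : Set X, C.IsCube q →
      ENNReal.ofReal c * netCont C f q < netCont C f (A ∩ q)) :
    ∀ U : Set X, IsOpen U → U.Nonempty → netCont C f (A ∩ U) = netCont C f U := by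
  intro U hU hUne
  have : Nonempty X := ⟨hUne.some⟩
  have hN := CubeSystem.netCont_eq_netOuterMeasure (C := C) hf
  have h' : ∀ q, C.IsCube q →
      ENNReal.ofReal c * C.netOuterMeasure f q ≤ C.netOuterMeasure f (A ∩ q) :=
    fun q hq => hN ▸ (h q hq).le
  refine le_antisymm (hN ▸ measure_mono inter_subset_right) ?_
  calc netCont C f U = C.netOuterMeasure f U := by rw [hN]
    _ ≤ netCont C f (A ∩ U) := le_iInf₂ fun Q hQ => le_iInf fun hcov =>
      CubeSystem.netOuterMeasure_le_tsum_of_isOpen_of_inter_subset (ENNReal.ofReal_pos.2 hc).ne'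
        ENNReal.ofReal_ne_top h' hU hQ hcov

/-- a uniform net-content lower bound over generalised cubes gives
`N^f(A ∩ U) = N^f(U)` for every non-empty open `U`. -/
theorem stmt7 {X : Type*} [MetricSpace X] [CompactSpace X]
    [MeasurableSpace X] [BorelSpace X]
    (C : CubeSystem X) (f : ℝ → ℝ) (hf : DimFunc f)
    (A : Set X) (hA : MeasurableSet A) (c : ℝ) (hc : 0 < c)
    (h : ∀ q : Set X, C.IsCube q →
      ENNReal.ofReal c * netCont C f q < netCont C f (A ∩ q)) :
    ∀ U : Set X, IsOpen U → U.Nonempty → netCont C f (A ∩ U) = netCont C f U :=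
  stmt7_general C f hf A c hc h
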